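/- Let m ≥ 2, K ≥ 0, and let C = (c_{ij}) be a real symmetric positive semidefinite m×m matrix. Let κ_{ij} (1 ≤ i, j ≤ m, i ≠ j) be real numbers with κ_{ij} = κ_{ji} and κ_{ij} ≤ K. Then (m-1) K ∑_{i,j=1}^m c_{ij}² - ∑_{i ≠ j} κ_{ij} (c_{ii} c_{jj} - c_{ij}²) ≥ 0. -/

import Mathlib

/-!
For `i ≠ j` the `2 × 2` minor `c_ii c_jj - c_ij²` of `C` is nonnegative, so with `κ_ij ≤ K` and
`K ≥ 0` each curvature term is at most `K c_ii c_jj`. By Cauchy–Schwarz on the diagonal,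
`∑_{i ≠ j} c_ii c_jj = (tr C)² - ∑ c_ii² ≤ (m - 1) ∑ c_ii² ≤ (m - 1) ∑_{i,j} c_ij²`.
-/

open Finset

lemma Matrix.PosSemidef.sq_apply_le_mul_diag {n : Type*} [Fintype n] {C : Matrix n n ℝ}
    (hC : C.PosSemidef) (i j : n) : C i j ^ 2 ≤ C i i * C j j := by
  have hminor := (hC.submatrix ![i, j]).det_nonneg
  have hsymm : C j i = C i j := hC.isHermitian.apply i j
  rw [Matrix.det_fin_two] at hminor
  simp only [Matrix.submatrix_apply, Matrix.cons_val_zero, Matrix.cons_val_one, hsymm] at hminor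
  nlinarith

lemma sum_offDiag_mul_eq {ι : Type*} [Fintype ι] [DecidableEq ι] (a : ι → ℝ) :
    ∑ i, ∑ j, (if i ≠ j then a i * a j else 0) = (∑ i, a i) ^ 2 - ∑ i, a i ^ 2 := by
  have hsplit : ∀ i j,
      (if i ≠ j then a i * a j else 0) = a i * a j - if i = j then a i * a j else 0 :=
    fun i j => by by_cases h : i = j <;> simp [h]
  simp only [hsplit, sum_sub_distrib, sum_ite_eq, mem_univ, if_true, sum_mul_sum, sq]

lemma sum_offDiag_mul_le {ι : Type*} [Fintype ι] [DecidableEq ι] (a : ι → ℝ) :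
    ∑ i, ∑ j, (if i ≠ j then a i * a j else 0) ≤ (Fintype.card ι - 1) * ∑ i, a i ^ 2 := by
  rw [sum_offDiag_mul_eq]
  have := sq_sum_le_card_mul_sum_sq (s := univ) (f := a)
  rw [card_univ] at this
  linarith

open Finset in
theorem stmt_2_general (m : ℕ) (hm : 2 ≤ m) (K : ℝ) (hK : 0 ≤ K)
    (C : Matrix (Fin m) (Fin m) ℝ) (hC : C.PosSemidef)
    (κ : Fin m → Fin m → ℝ)
    (hκ : ∀ i j : Fin m, i ≠ j → κ i j ≤ K) :
    0 ≤ ((m : ℝ) - 1) * K * ∑ i : Fin m, ∑ j : Fin m, (C i j) ^ 2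
        - ∑ i : Fin m, ∑ j : Fin m,
            (if i ≠ j then κ i j * (C i i * C j j - (C i j) ^ 2) else 0) := by
  have hm1 : (0 : ℝ) ≤ m - 1 := sub_nonneg.2 (by exact_mod_cast (by omega : 1 ≤ m))
  have hterm : ∀ i j : Fin m, i ≠ j →
      κ i j * (C i i * C j j - C i j ^ 2) ≤ K * (C i i * C j j) := fun i j hij => by
    have hminor : 0 ≤ C i i * C j j - C i j ^ 2 := sub_nonneg.2 (hC.sq_apply_le_mul_diag i j)
    nlinarith [mul_le_mul_of_nonneg_right (hκ i j hij) hminor, sq_nonneg (C i j)]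
  rw [sub_nonneg]
  calc ∑ i, ∑ j, (if i ≠ j then κ i j * (C i i * C j j - C i j ^ 2) else 0)
      ≤ ∑ i, ∑ j, (if i ≠ j then K * (C i i * C j j) else 0) :=
        sum_le_sum fun i _ => sum_le_sum fun j _ => by
          split_ifs with hij
          exacts [hterm i j hij, le_rfl]
    _ = K * ∑ i, ∑ j, (if i ≠ j then C i i * C j j else 0) := by
        simp only [mul_sum, mul_ite, mul_zero]
    _ ≤ K * ((m - 1) * ∑ i, C i i ^ 2) := by
        gcongr
        simpa using sum_offDiag_mul_le fun i => C i i
    _ ≤ (m - 1) * K * ∑ i, ∑ j, C i j ^ 2 := by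
        rw [mul_left_comm, ← mul_assoc]
        gcongr
        exact single_le_sum (fun j _ => sq_nonneg (C i j)) (mem_univ i)

open Finset in
/-- pointwise nonnegativity of the curvature term `Q₁(dφ)`. -/
theorem stmt_2 (m : ℕ) (hm : 2 ≤ m) (K : ℝ) (hK : 0 ≤ K)
    (C : Matrix (Fin m) (Fin m) ℝ) (hC : C.PosSemidef)
    (κ : Fin m → Fin m → ℝ) (hκsymm : ∀ i j : Fin m, i ≠ j → κ i j = κ j i)
    (hκ : ∀ i j : Fin m, i ≠ j → κ i j ≤ K) :
    0 ≤ ((m : ℝ) - 1) * K * ∑ i : Fin m, ∑ j : Fin m, (C i j) ^ 2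
        - ∑ i : Fin m, ∑ j : Fin m,
            (if i ≠ j then κ i j * (C i i * C j j - (C i j) ^ 2) else 0) :=
  stmt_2_general m hm K hK C hC κ hκ
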